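/- arXiv:2312.09091 — 6 statements merged into one kernel-verified Lean document; each statement's English description precedes it below -/
import Mathlib

section
/- If e, f, g, h, k, l are natural numbers greater than 1 satisfying e^2 - f^2 = g^2 - h^2 = k^2 - l^2 and e^2·f^2 = g^2·h^2 + k^2·l^2, then the cuboid with edges (e^2 - f^2, 2gh, 2kl) is a perfect cuboid: (e^2-f^2)^2 + (2gh)^2 = (g^2+h^2)^2, (e^2-f^2)^2 + (2kl)^2 = (k^2+l^2)^2, (2gh)^2 + (2kl)^2 = (2ef)^2, and (e^2-f^2)^2 + (2gh)^2 + (2kl)^2 = (e^2+f^2)^2. -/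
theorem perfect_cuboid_type1 (e f g h k l : ℕ)
    (he : 1 < e) (hf : 1 < f) (hg : 1 < g) (hh : 1 < h) (hk : 1 < k) (hl : 1 < l)
    (hef : f < e) (hgh : h < g) (hkl : l < k)
    (h1 : e^2 - f^2 = g^2 - h^2) (h2 : g^2 - h^2 = k^2 - l^2)
    (h3 : e^2 * f^2 = g^2 * h^2 + k^2 * l^2) :
    (e^2 - f^2)^2 + (2*g*h)^2 = (g^2 + h^2)^2 ∧
    (e^2 - f^2)^2 + (2*k*l)^2 = (k^2 + l^2)^2 ∧
    (2*g*h)^2 + (2*k*l)^2 = (2*e*f)^2 ∧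
    (e^2 - f^2)^2 + (2*g*h)^2 + (2*k*l)^2 = (e^2 + f^2)^2 := by
  have hf2 : f^2 ≤ e^2 := Nat.pow_le_pow_left hef.le 2
  have hh2 : h^2 ≤ g^2 := Nat.pow_le_pow_left hgh.le 2
  have hl2 : l^2 ≤ k^2 := Nat.pow_le_pow_left hkl.le 2
  zify [hf2, hh2, hl2] at h1 h2 ⊢
  have h3' : (e:ℤ)^2*f^2 = g^2*h^2 + k^2*l^2 := by exact_mod_cast h3
  refine ⟨by linear_combination ((e:ℤ)^2-f^2+g^2-h^2)*h1,
    by linear_combination ((e:ℤ)^2-f^2+k^2-l^2)*(h1.trans h2),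
    by linear_combination (-4:ℤ)*h3',
    by linear_combination (-4:ℤ)*h3'⟩
end

section
/- If a, e, f, g, h, k, l are natural numbers greater than 1 satisfying a(e^2 - f^2) = g^2 - h^2 = k^2 - l^2 and a^2·e^2·f^2 = g^2·h^2 + k^2·l^2, then (a(e^2-f^2))^2 + (2gh)^2 = (g^2+h^2)^2, (a(e^2-f^2))^2 + (2kl)^2 = (k^2+l^2)^2, (2gh)^2 + (2kl)^2 = (2aef)^2, and (a(e^2-f^2))^2 + (2gh)^2 + (2kl)^2 = (a(e^2+f^2))^2. -/
theorem perfect_cuboid_type2 (a e f g h k l : ℕ)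
    (ha : 1 < a) (he : 1 < e) (hf : 1 < f) (hg : 1 < g) (hh : 1 < h) (hk : 1 < k) (hl : 1 < l)
    (hef : f < e) (hgh : h < g) (hkl : l < k)
    (h1 : a * (e^2 - f^2) = g^2 - h^2) (h2 : g^2 - h^2 = k^2 - l^2)
    (h3 : a^2 * e^2 * f^2 = g^2 * h^2 + k^2 * l^2) :
    (a * (e^2 - f^2))^2 + (2*g*h)^2 = (g^2 + h^2)^2 ∧
    (a * (e^2 - f^2))^2 + (2*k*l)^2 = (k^2 + l^2)^2 ∧
    (2*g*h)^2 + (2*k*l)^2 = (2*a*e*f)^2 ∧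
    (a * (e^2 - f^2))^2 + (2*g*h)^2 + (2*k*l)^2 = (a * (e^2 + f^2))^2 := by
  have hfe : f^2 ≤ e^2 := Nat.pow_le_pow_left hef.le 2
  have hhg : h^2 ≤ g^2 := Nat.pow_le_pow_left hgh.le 2
  have hlk : l^2 ≤ k^2 := Nat.pow_le_pow_left hkl.le 2
  zify [hfe, hhg, hlk] at h1 h2 h3 ⊢
  refine ⟨by linear_combination (a*((e:ℤ)^2-f^2)+g^2-h^2) * h1,
    by linear_combination (a*((e:ℤ)^2-f^2)+k^2-l^2) * (h1.trans h2),
    by linear_combination -4 * h3,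
    by linear_combination -4 * h3⟩
end

section
/- If b, e, f, g, h, k, l are natural numbers greater than 1 satisfying e^2 - f^2 = b(g^2 - h^2) = k^2 - l^2 and e^2·f^2 = b^2·g^2·h^2 + k^2·l^2, then (e^2-f^2)^2 + (2bgh)^2 = (b(g^2+h^2))^2, (e^2-f^2)^2 + (2kl)^2 = (k^2+l^2)^2, (2bgh)^2 + (2kl)^2 = (2ef)^2, and (e^2-f^2)^2 + (2bgh)^2 + (2kl)^2 = (e^2+f^2)^2. -/
theorem perfect_cuboid_type3 (b e f g h k l : ℕ)
    (hb : 1 < b) (he : 1 < e) (hf : 1 < f) (hg : 1 < g) (hh : 1 < h) (hk : 1 < k) (hl : 1 < l)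
    (hef : f < e) (hgh : h < g) (hkl : l < k)
    (h1 : e^2 - f^2 = b * (g^2 - h^2)) (h2 : b * (g^2 - h^2) = k^2 - l^2)
    (h3 : e^2 * f^2 = b^2 * g^2 * h^2 + k^2 * l^2) :
    (e^2 - f^2)^2 + (2*b*g*h)^2 = (b * (g^2 + h^2))^2 ∧
    (e^2 - f^2)^2 + (2*k*l)^2 = (k^2 + l^2)^2 ∧
    (2*b*g*h)^2 + (2*k*l)^2 = (2*e*f)^2 ∧
    (e^2 - f^2)^2 + (2*b*g*h)^2 + (2*k*l)^2 = (e^2 + f^2)^2 := by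
  have hf2 : f^2 ≤ e^2 := Nat.pow_le_pow_left hef.le 2
  have hh2 : h^2 ≤ g^2 := Nat.pow_le_pow_left hgh.le 2
  have hl2 : l^2 ≤ k^2 := Nat.pow_le_pow_left hkl.le 2
  zify [hf2, hh2, hl2] at h1 h2 h3 ⊢
  refine ⟨by rw [h1]; ring, by rw [h1, h2]; ring, by linear_combination (-4:ℤ) * h3, ?_⟩
  linear_combination (-4:ℤ) * h3
end

section
/- If a, b, c, e, f, g, h, k, l are natural numbers greater than 1 satisfying a(e^2 - f^2) = b(g^2 - h^2) = c(k^2 - l^2) and a^2·e^2·f^2 = b^2·g^2·h^2 + c^2·k^2·l^2, then (a(e^2-f^2))^2 + (2bgh)^2 = (b(g^2+h^2))^2, (a(e^2-f^2))^2 + (2ckl)^2 = (c(k^2+l^2))^2, (2bgh)^2 + (2ckl)^2 = (2aef)^2, and (a(e^2-f^2))^2 + (2bgh)^2 + (2ckl)^2 = (a(e^2+f^2))^2. -/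
theorem perfect_cuboid_type6 (a b c e f g h k l : ℕ)
    (ha : 1 < a) (hb : 1 < b) (hc : 1 < c) (he : 1 < e) (hf : 1 < f)
    (hg : 1 < g) (hh : 1 < h) (hk : 1 < k) (hl : 1 < l)
    (hef : f < e) (hgh : h < g) (hkl : l < k)
    (h1 : a * (e^2 - f^2) = b * (g^2 - h^2)) (h2 : b * (g^2 - h^2) = c * (k^2 - l^2))
    (h3 : a^2 * e^2 * f^2 = b^2 * g^2 * h^2 + c^2 * k^2 * l^2) :
    (a * (e^2 - f^2))^2 + (2*b*g*h)^2 = (b * (g^2 + h^2))^2 ∧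
    (a * (e^2 - f^2))^2 + (2*c*k*l)^2 = (c * (k^2 + l^2))^2 ∧
    (2*b*g*h)^2 + (2*c*k*l)^2 = (2*a*e*f)^2 ∧
    (a * (e^2 - f^2))^2 + (2*b*g*h)^2 + (2*c*k*l)^2 = (a * (e^2 + f^2))^2 := by
  have hf2 : f^2 ≤ e^2 := Nat.pow_le_pow_left hef.le 2
  have hh2 : h^2 ≤ g^2 := Nat.pow_le_pow_left hgh.le 2
  have hl2 : l^2 ≤ k^2 := Nat.pow_le_pow_left hkl.le 2
  zify [hf2, hh2, hl2] at h1 h2 h3 ⊢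
  refine ⟨?_, ?_, ?_, ?_⟩
  · linear_combination ((a:ℤ)*(e^2-f^2)+b*(g^2-h^2))*h1
  · linear_combination ((a:ℤ)*(e^2-f^2)+c*(k^2-l^2))*(h1.trans h2)
  · linear_combination (-4:ℤ)*h3
  · linear_combination (-4:ℤ)*h3
end

section
/- If d, e, f, g, h are natural numbers greater than 1 satisfying e^2 - f^2 = g^2 - h^2 and e^2·f^2 + g^2·h^2 = d^2, then the triple (e^2-f^2, 2ef, 2gh) forms an Euler brick: (e^2-f^2)^2 + (2ef)^2 = (e^2+f^2)^2, (e^2-f^2)^2 + (2gh)^2 = (g^2+h^2)^2, and (2ef)^2 + (2gh)^2 = (2d)^2. -/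
theorem euler_brick_type1 (d e f g h : ℕ)
    (hd : 1 < d) (he : 1 < e) (hf : 1 < f) (hg : 1 < g) (hh : 1 < h)
    (hef : f < e) (hgh : h < g)
    (h1 : e^2 - f^2 = g^2 - h^2) (h2 : e^2 * f^2 + g^2 * h^2 = d^2) :
    (e^2 - f^2)^2 + (2*e*f)^2 = (e^2 + f^2)^2 ∧
    (e^2 - f^2)^2 + (2*g*h)^2 = (g^2 + h^2)^2 ∧
    (2*e*f)^2 + (2*g*h)^2 = (2*d)^2 := by
  have hef2 : f^2 ≤ e^2 := Nat.pow_le_pow_left hef.le 2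
  have hgh2 : h^2 ≤ g^2 := Nat.pow_le_pow_left hgh.le 2
  refine ⟨?_, ?_, ?_⟩
  · zify [hef2]; ring
  · zify [hef2, hgh2] at h1 ⊢
    nlinarith [h1]
  · nlinarith [h2]
end

section
/- If a, b, d, e, f, g, h are natural numbers greater than 1 satisfying a(e^2 - f^2) = b(g^2 - h^2) and a^2·e^2·f^2 + b^2·g^2·h^2 = d^2, then (a(e^2-f^2))^2 + (2aef)^2 = (a(e^2+f^2))^2, (a(e^2-f^2))^2 + (2bgh)^2 = (b(g^2+h^2))^2, and (2aef)^2 + (2bgh)^2 = (2d)^2. -/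
theorem euler_brick_type3 (a b d e f g h : ℕ)
    (ha : 1 < a) (hb : 1 < b) (hd : 1 < d) (he : 1 < e) (hf : 1 < f) (hg : 1 < g) (hh : 1 < h)
    (hef : f < e) (hgh : h < g)
    (h1 : a * (e^2 - f^2) = b * (g^2 - h^2)) (h2 : a^2 * e^2 * f^2 + b^2 * g^2 * h^2 = d^2) :
    (a * (e^2 - f^2))^2 + (2*a*e*f)^2 = (a * (e^2 + f^2))^2 ∧
    (a * (e^2 - f^2))^2 + (2*b*g*h)^2 = (b * (g^2 + h^2))^2 ∧
    (2*a*e*f)^2 + (2*b*g*h)^2 = (2*d)^2 := by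
  have h1' : f^2 ≤ e^2 := Nat.pow_le_pow_left hef.le 2
  have h2' : h^2 ≤ g^2 := Nat.pow_le_pow_left hgh.le 2
  refine ⟨?_, ?_, ?_⟩
  · zify [h1']; ring
  · zify [h1', h2'] at h1 ⊢; rw [h1]; ring
  · zify at h2 ⊢; nlinarith
end
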